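/- Let λ be a partition. Then for every integer k ≥ 1, P_k(λ) = k! · Σ_{l,m ≥ 0, 2l+1+m = k} (2^{−2l}/(2l+1)!) · ch_m(λ), where ch_m(λ) = (1/m!) Σ_{s∈λ} c(s)^m. (This is the coefficient identity obtained by expanding ς(z)·Σ_{s∈λ} e^{z·c(s)} = Σ_k P_k(λ) z^k/k! with ς(z) = 2 sinh(z/2) = Σ_{l≥0} 2^{−2l} z^{2l+1}/(2l+1)!.) -/

import Mathlib

/-!
Both sides are sums over the boxes `s` of the diagram: by the binomial theorem the right-hand
side is `∑ₛ ((c(s) + 1/2)^k - (c(s) - 1/2)^k)`, the coefficients `2^(-2l)/(2l+1)!` being those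
of `2 sinh(z/2)`. The box `(i, j)` lies on the hook of the diagonal box `(d, d)`, `d = min i j`,
and the contents along that hook are the consecutive integers `-b_d, …, a_d`, so the sum
telescopes along each hook to `(a_d + 1/2)^k - (-b_d - 1/2)^k`.
-/

open Finset

/-- The Frobenius rank of a partition `μ` (0-indexed): the number of indices `i`
with `i < μ i`. -/
noncomputable def frobeniusRank (μ : ℕ → ℕ) : ℕ := Nat.card {i : ℕ | i < μ i}

/-- The `j`-th part (0-indexed) of the conjugate partition of `μ`:
`μ' j = #{i : μ i > j}`. -/
noncomputable def conjugatePart (μ : ℕ → ℕ) (j : ℕ) : ℕ := Nat.card {i : ℕ | j < μ i}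

theorem IsLowerSet.lt_natCard_iff {s : Set ℕ} (hs : IsLowerSet s) (hne : s ≠ Set.univ) (i : ℕ) :
    i < Nat.card s ↔ i ∈ s := by
  obtain ⟨a, rfl⟩ := hs.eq_univ_or_Iio.resolve_left hne
  simp

theorem Finset.sum_range_eq_sum_range_min_add_sum_Ico {M : Type*} [AddCommMonoid M]
    (f : ℕ → M) (m n : ℕ) :
    ∑ i ∈ range n, f i = ∑ i ∈ range (min m n), f i + ∑ i ∈ Ico m n, f i := by
  rcases le_total m n with h | h
  · rw [min_eq_left h, sum_range_add_sum_Ico f h]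
  · rw [min_eq_right h, Ico_eq_empty_of_le h, sum_empty, add_zero]

section Partition

variable {μ : ℕ → ℕ} {N : ℕ}

theorem lt_frobeniusRank_iff (hμ : Antitone μ) (hN : μ N = 0) (i : ℕ) :
    i < frobeniusRank μ ↔ i < μ i :=
  IsLowerSet.lt_natCard_iff (s := {i | i < μ i})
    (fun _ _ hba ha => hba.trans_lt (lt_of_lt_of_le ha (hμ hba)))
    ((Set.ne_univ_iff_exists_notMem _).2 ⟨N, by simp [hN]⟩) i

theorem lt_conjugatePart_iff (hμ : Antitone μ) (hN : μ N = 0) (i j : ℕ) :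
    i < conjugatePart μ j ↔ j < μ i :=
  IsLowerSet.lt_natCard_iff (s := {i | j < μ i}) (fun _ _ hba ha => lt_of_lt_of_le ha (hμ hba))
    ((Set.ne_univ_iff_exists_notMem _).2 ⟨N, by simp [hN]⟩) i

theorem frobeniusRank_le (hμ : Antitone μ) (hN : μ N = 0) : frobeniusRank μ ≤ N := by
  by_contra! h
  simpa [hN] using (lt_frobeniusRank_iff hμ hN N).1 h

theorem sum_diagram_eq_sum_hooks {M : Type*} [AddCommMonoid M] (hμ : Antitone μ) (hN : μ N = 0)
    (h : ℕ → ℕ → M) :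
    ∑ i ∈ range N, ∑ j ∈ range (μ i), h i j =
      ∑ d ∈ range (frobeniusRank μ),
        (∑ j ∈ Ico d (μ d), h d j + ∑ i ∈ Ioo d (conjugatePart μ d), h i d) := by
  simp_rw [fun i => sum_range_eq_sum_range_min_add_sum_Ico (h i) i (μ i), sum_add_distrib]
  rw [add_comm]
  congr 1
  · refine (sum_subset (range_subset_range.2 (frobeniusRank_le hμ hN)) fun i _ hi => ?_).symm
    rw [Ico_eq_empty_of_le (by simpa [lt_frobeniusRank_iff hμ hN] using hi), sum_empty]
  · refine sum_comm' fun i d => ?_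
    simp only [mem_range, mem_Ioo, lt_min_iff, lt_frobeniusRank_iff hμ hN,
      lt_conjugatePart_iff hμ hN]
    constructor
    · rintro ⟨-, hdi, hdμ⟩
      exact ⟨⟨hdi, hdμ⟩, hdμ.trans_le (hμ hdi.le)⟩
    · rintro ⟨⟨hdi, hdμ⟩, -⟩
      refine ⟨?_, hdi, hdμ⟩
      by_contra! hNi
      have := hμ hNi
      omega

end Partition

theorem sum_hook_telescope {G : Type*} [AddCommGroup G] (f : ℚ → G) {d a b : ℕ}
    (hda : d ≤ a) (hdb : d < b) :
    ∑ j ∈ Ico d a, (f ((j : ℚ) - d + 1 / 2) - f ((j : ℚ) - d - 1 / 2)) +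
        ∑ i ∈ Ioo d b, (f ((d : ℚ) - i + 1 / 2) - f ((d : ℚ) - i - 1 / 2)) =
      f ((a : ℚ) - d - 1 / 2) - f (-((b : ℚ) - d - 1 / 2)) := by
  have arm : ∑ j ∈ Ico d a, (f ((j : ℚ) - d + 1 / 2) - f ((j : ℚ) - d - 1 / 2)) =
      f ((a : ℚ) - d - 1 / 2) - f (-(1 / 2)) := by
    have := sum_Ico_sub (fun j : ℕ => f ((j : ℚ) - d - 1 / 2)) hda
    simp only [Nat.cast_add, Nat.cast_one, sub_self, zero_sub] at this
    convert this using 3 with j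
    ring_nf
  have leg : ∑ i ∈ Ioo d b, (f ((d : ℚ) - i + 1 / 2) - f ((d : ℚ) - i - 1 / 2)) =
      f (-(1 / 2)) - f (-((b : ℚ) - d - 1 / 2)) := by
    set v : ℕ → G := fun i => f ((d : ℚ) - i + 1 / 2)
    calc _ = -∑ i ∈ Ico (d + 1) b, (v (i + 1) - v i) := by
          rw [← Ico_add_one_left_eq_Ioo, ← sum_neg_distrib]
          refine sum_congr rfl fun i _ => ?_
          rw [neg_sub]
          push_cast [v]
          congr 2; ring
      _ = _ := by
          rw [sum_Ico_sub v hdb, neg_sub]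
          push_cast [v]
          congr 2 <;> ring
  rw [arm, leg, sub_add_sub_cancel]

theorem factorial_mul_sum_sinh_coeff_mul_pow {K : Type*} [Field K] [CharZero K] (k : ℕ) (c : K) :
    (k.factorial : K) *
        ∑ p ∈ (range k ×ˢ range k).filter (fun p => 2 * p.1 + 1 + p.2 = k),
          (((2 : K) ^ (2 * p.1))⁻¹ / ((2 * p.1 + 1).factorial : K)) *
            ((1 / (p.2.factorial : K)) * c ^ p.2) =
      (c + 1 / 2) ^ k - (c - 1 / 2) ^ k := by
  have binomial : (c + 1 / 2) ^ k - (c - 1 / 2) ^ k =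
      ∑ m ∈ range (k + 1), c ^ m * ((1 / 2) ^ (k - m) - (-(1 / 2)) ^ (k - m)) * k.choose m := by
    rw [sub_eq_add_neg c, add_pow, add_pow, ← sum_sub_distrib]
    exact sum_congr rfl fun m _ => by ring
  have even_vanish : ∀ m ∈ range (k + 1),
      c ^ m * ((1 / 2 : K) ^ (k - m) - (-(1 / 2)) ^ (k - m)) * k.choose m ≠ 0 → Odd (k - m) := by
    intro m _ hm
    by_contra hodd
    rw [Nat.not_odd_iff_even.1 hodd |>.neg_pow, sub_self, mul_zero, zero_mul] at hm
    exact hm rfl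
  rw [binomial, ← sum_filter_of_ne even_vanish, mul_sum]
  refine sum_nbij' (fun p => p.2) (fun m => ((k - m - 1) / 2, m)) ?_ ?_ ?_ ?_ ?_
  · simp only [mem_filter, mem_product, mem_range, Nat.odd_iff]
    omega
  · simp only [mem_filter, mem_product, mem_range, Nat.odd_iff]
    omega
  · rintro ⟨l, m⟩ hp
    simp only [mem_filter, mem_product, mem_range] at hp
    simp only [Prod.mk.injEq, and_true]
    omega
  · intro m _
    rfl
  · rintro ⟨l, m⟩ hp
    simp only [mem_filter, mem_product, mem_range] at hp
    have hkm : k - m = 2 * l + 1 := by omega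
    rw [hkm, (odd_two_mul_add_one l).neg_pow, Nat.cast_choose K (by omega : m ≤ k), hkm,
      one_div, one_div, inv_pow]
    field_simp
    ring

theorem stmt_6_general (μ : ℕ → ℕ) (hμ : Antitone μ) (hfin : ∃ N, ∀ i, N ≤ i → μ i = 0)
    (k : ℕ) :
    ∑ j ∈ Finset.range (frobeniusRank μ),
        (((μ j : ℚ) - (j : ℚ) - 1 / 2) ^ k -
          (-((conjugatePart μ j : ℚ) - (j : ℚ) - 1 / 2)) ^ k) =
      (k.factorial : ℚ) *
        ∑ p ∈ (Finset.range k ×ˢ Finset.range k).filter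
            (fun p => 2 * p.1 + 1 + p.2 = k),
          (((2 : ℚ) ^ (2 * p.1))⁻¹ / ((2 * p.1 + 1).factorial : ℚ)) *
            ((1 / (p.2.factorial : ℚ)) *
              ∑' i : ℕ, ∑ j ∈ Finset.range (μ i), ((j : ℚ) - (i : ℚ)) ^ p.2) := by
  obtain ⟨N, hN⟩ := hfin
  have hμN : μ N = 0 := hN N le_rfl
  have tsum_eq_sum : ∀ m : ℕ, ∑' i : ℕ, ∑ j ∈ range (μ i), ((j : ℚ) - i) ^ m =
      ∑ i ∈ range N, ∑ j ∈ range (μ i), ((j : ℚ) - i) ^ m := fun m =>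
    tsum_eq_sum fun i hi => by rw [hN i (by simpa using hi), sum_range_zero]
  symm
  calc _ = ∑ i ∈ range N, ∑ j ∈ range (μ i),
        (((j : ℚ) - i + 1 / 2) ^ k - ((j : ℚ) - i - 1 / 2) ^ k) := by
        simp only [tsum_eq_sum, mul_sum, ← factorial_mul_sum_sinh_coeff_mul_pow]
        rw [sum_comm]
        exact sum_congr rfl fun i _ => sum_comm
    _ = _ := sum_diagram_eq_sum_hooks hμ hμN _
    _ = _ := sum_congr rfl fun d hd => by
        have hdμ : d < μ d := (lt_frobeniusRank_iff hμ hμN d).1 (mem_range.1 hd)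
        exact sum_hook_telescope (· ^ k) hdμ.le ((lt_conjugatePart_iff hμ hμN d d).2 hdμ)

/-- For a partition `μ` and every integer `k ≥ 1`:
`P_k(μ) = k! · Σ_{l,m ≥ 0, 2l+1+m = k} (2^{-2l}/(2l+1)!) · ch_m(μ)`,
where `P_k(μ) = Σ_{j=1}^r ((a_j+1/2)^k - (-b_j-1/2)^k)` (0-indexed:
`a_j + 1/2 = μ j - j - 1/2`, `-b_j - 1/2 = -(μ' j - j - 1/2)`) and
`ch_m(μ) = (1/m!) Σ_{s∈μ} c(s)^m`.  The (finite) sum over pairs `(l, m)` with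
`2l + 1 + m = k` is written over `Finset.range k ×ˢ Finset.range k`, which
contains all such pairs. -/
theorem stmt_6 (μ : ℕ → ℕ) (hμ : Antitone μ) (hfin : ∃ N, ∀ i, N ≤ i → μ i = 0)
    (k : ℕ) (hk : 1 ≤ k) :
    ∑ j ∈ Finset.range (frobeniusRank μ),
        (((μ j : ℚ) - (j : ℚ) - 1 / 2) ^ k -
          (-((conjugatePart μ j : ℚ) - (j : ℚ) - 1 / 2)) ^ k) =
      (k.factorial : ℚ) *
        ∑ p ∈ (Finset.range k ×ˢ Finset.range k).filter
            (fun p => 2 * p.1 + 1 + p.2 = k),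
          (((2 : ℚ) ^ (2 * p.1))⁻¹ / ((2 * p.1 + 1).factorial : ℚ)) *
            ((1 / (p.2.factorial : ℚ)) *
              ∑' i : ℕ, ∑ j ∈ Finset.range (μ i), ((j : ℚ) - (i : ℚ)) ^ p.2) :=
  stmt_6_general μ hμ hfin k
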